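/- arXiv:1107.3658 — 2 statements merged into one kernel-verified Lean document; each statement's English description precedes it below -/
import Mathlib

section
/- Let G be a graph and let X, Y ⊆ V(G) be vertex subsets. If S ⊆ Y is an important (X,Y)-separator, then for every set Y' satisfying S ⊆ Y' ⊆ Y, the set S is an important (X,Y')-separator. -/
set_option maxHeartbeats 1000000

variable {V : Type}

/-- The graph obtained from `G` by deleting the vertex set `S`
(deleted vertices are kept as isolated vertices). -/
def gdelete (G : SimpleGraph V) (S : Set V) : SimpleGraph V where
  Adj u v := G.Adj u v ∧ u ∉ S ∧ v ∉ S
  symm := by constructor; intro u v h; exact ⟨h.1.symm, h.2.2, h.2.1⟩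
  loopless := by constructor; intro v h; exact G.loopless.irrefl v h.1

/-- `R_G(X, S)`: the set of vertices reachable from `X \ S` in `G − S`. -/
def greach (G : SimpleGraph V) (X S : Set V) : Set V :=
  {v | v ∉ S ∧ ∃ x ∈ X \ S, (gdelete G S).Reachable x v}

/-- `S` is an `(X,Y)`-separator: no vertex of `Y` is reachable from `X \ S` in `G − S`. -/
def IsSep (G : SimpleGraph V) (X Y S : Set V) : Prop := Y ∩ greach G X S = ∅

/-- A minimal `(X,Y)`-separator: none of its proper subsets is an `(X,Y)`-separator. -/
def IsMinSep (G : SimpleGraph V) (X Y S : Set V) : Prop :=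
  IsSep G X Y S ∧ ∀ S' ⊂ S, ¬ IsSep G X Y S'

/-- `S'` dominates `S`: `|S'| ≤ |S|` and `R_G(X, S) ⊊ R_G(X, S')`. -/
def SepDominates (G : SimpleGraph V) (X S' S : Set V) : Prop :=
  S'.ncard ≤ S.ncard ∧ greach G X S ⊂ greach G X S'

/-- An important `(X,Y)`-separator: minimal and dominated by no `(X,Y)`-separator. -/
def IsImpSep (G : SimpleGraph V) (X Y S : Set V) : Prop :=
  IsMinSep G X Y S ∧ ¬ ∃ S', IsSep G X Y S' ∧ SepDominates G X S' S

lemma greach_adj {G : SimpleGraph V} {X T : Set V} {u v : V}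
    (hu : u ∈ greach G X T) (h : (gdelete G T).Adj u v) : v ∈ greach G X T := by
  obtain ⟨-, x, hx, hxu⟩ := hu
  exact ⟨h.2.2, x, hx, hxu.trans h.reachable⟩

lemma self_mem_greach {G : SimpleGraph V} {X T : Set V} {x : V} (hx : x ∈ X \ T) :
    x ∈ greach G X T :=
  ⟨hx.2, x, hx, .refl x⟩

/- A walk of `G - T` that starts in `R(X, T) ∩ R(X, S)` stays in `R(X, T)`, hence never meets `S`,
so it is also a walk of `G - S`. -/
lemma greach_subset_greach {G : SimpleGraph V} {X S T : Set V}
    (h : Disjoint S (greach G X T)) : greach G X T ⊆ greach G X S := by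
  have walk_mem : ∀ {u v : V} (w : (gdelete G T).Walk u v),
      u ∈ greach G X T → u ∈ greach G X S → v ∈ greach G X S := by
    intro u v w
    induction w with
    | nil => exact fun _ huS => huS
    | cons hadj _ ih =>
      intro huT huS
      have hT := greach_adj huT hadj
      exact ih hT (greach_adj huS ⟨hadj.1, huS.1, h.notMem_of_mem_right hT⟩)
  rintro v ⟨-, x, hx, ⟨w⟩⟩
  have hxT : x ∈ greach G X T := self_mem_greach hx
  exact walk_mem w hxT (self_mem_greach ⟨hx.1, h.notMem_of_mem_right hxT⟩)

lemma IsSep.mono {G : SimpleGraph V} {X Y Y' S : Set V} (hS : IsSep G X Y S) (hY' : Y' ⊆ Y) :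
    IsSep G X Y' S :=
  Set.subset_eq_empty (Set.inter_subset_inter_left _ hY') hS

/- With `IsSep.mono`: when `S ⊆ Y' ⊆ Y` and `S` separates `X` from `Y`, the `(X,Y')`-separators
are exactly the `(X,Y)`-separators, so minimality and importance transfer. -/
lemma IsSep.of_isSep_of_subset {G : SimpleGraph V} {X Y Y' S T : Set V} (hS : IsSep G X Y S)
    (hSY' : S ⊆ Y') (hT : IsSep G X Y' T) : IsSep G X Y T := by
  have hdisj : Disjoint S (greach G X T) :=
    (Set.disjoint_iff_inter_eq_empty.mpr hT).mono_left hSY'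
  exact Set.subset_eq_empty (Set.inter_subset_inter_right _ (greach_subset_greach hdisj)) hS

theorem stmt10_general (G : SimpleGraph V) (X Y S : Set V)
    (hS : IsImpSep G X Y S) :
    ∀ Y' : Set V, S ⊆ Y' → Y' ⊆ Y → IsImpSep G X Y' S := by
  intro Y' hSY' hY'Y
  obtain ⟨⟨hsep, hmin⟩, hundominated⟩ := hS
  refine ⟨⟨hsep.mono hY'Y, fun S' hS' hsep' => ?_⟩, ?_⟩
  · exact hmin S' hS' (hsep.of_isSep_of_subset hSY' hsep')
  rintro ⟨S', hsep', hdom⟩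
  exact hundominated ⟨S', hsep.of_isSep_of_subset hSY' hsep', hdom⟩

/-- if `S ⊆ Y` is an important `(X,Y)`-separator then for every `Y'`
with `S ⊆ Y' ⊆ Y`, the set `S` is an important `(X,Y')`-separator. -/
theorem stmt10 [Fintype V] (G : SimpleGraph V) (X Y S : Set V)
    (hSY : S ⊆ Y) (hS : IsImpSep G X Y S) :
    ∀ Y' : Set V, S ⊆ Y' → Y' ⊆ Y → IsImpSep G X Y' S :=
  stmt10_general G X Y S hS
end

section
/- Let (G, L, f) be a labeled graph, let X ⊆ V(G) be a subset of vertices, and let J ⊆ L be a subset of labels. If S is an important (X, V_G(J))-separator of size k, then there is a set J* ⊆ J with |J*| ≤ Σ_{i=1}^{k} (i+1) = k(k+3)/2 such that S is an important (X, V_G(J*))-separator. -/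
/-!
Let `J* ⊆ J` be finite and inclusion-minimal such that `S` is still an important
`(X, V(J*))`-separator. For each `j ∈ J*`, `S` is not important for `V(J* \ {j})`, so some
separator `S_j` of `V(J* \ {j})` with `|S_j| ≤ |S|` has reach `R_j ⊋ R(S)`; then `R_j` meets `S`,
and distinct `R_i`, `R_j` share no vertex of `V(J*)`. The boundary `∂D` of a vertex set (vertices
outside `D` lying in `X` or adjacent to `D`) is a separator whose reach stays inside `D`, and
`|∂D|` is submodular. Importance of `S`, applied to the boundary of an intersection of regions,
lets us uncross the regions one at a time:
`|∂(R_1 ∪ ⋯ ∪ R_m)| + m ≤ |S| + |S ∩ (R_1 ∪ ⋯ ∪ R_m)|`. Hence `|J*| = m ≤ 2|S| ≤ k(k+3)/2`.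
-/

set_option maxHeartbeats 1000000

variable {V : Type}

/-- `V_G(J)`: the vertices carrying at least one label from `J`. -/
def labelVerts {L : Type} (f : V → Set L) (J : Set L) : Set V := {v | (f v ∩ J).Nonempty}

open Set

section Reach

variable {G : SimpleGraph V} {X T : Set V}

theorem mem_greach_of_mem {x : V} (hx : x ∈ X) (hxT : x ∉ T) : x ∈ greach G X T :=
  ⟨hxT, x, ⟨hx, hxT⟩, .refl x⟩

theorem mem_greach_of_adj {u v : V} (hu : u ∈ greach G X T) (huv : G.Adj u v) (hv : v ∉ T) :
    v ∈ greach G X T := by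
  obtain ⟨huT, x, hx, hr⟩ := hu
  exact ⟨hv, x, hx, hr.trans (SimpleGraph.Adj.reachable (G := gdelete G T) ⟨huv, huT, hv⟩)⟩

theorem greach_induction (P : V → Prop) (start : ∀ x ∈ X, x ∉ T → P x)
    (step : ∀ u v, u ∈ greach G X T → P u → G.Adj u v → v ∉ T → P v) :
    ∀ v ∈ greach G X T, P v := by
  rintro v ⟨-, x, ⟨hx, hxT⟩, hr⟩
  rw [SimpleGraph.reachable_iff_reflTransGen] at hr
  suffices P v ∧ v ∈ greach G X T from this.1
  induction hr with
  | refl => exact ⟨start x hx hxT, mem_greach_of_mem hx hxT⟩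
  | tail _ hab ih =>
    exact ⟨step _ _ ih.2 ih.1 hab.1 hab.2.2, mem_greach_of_adj ih.2 hab.1 hab.2.2⟩

theorem greach_anti {T₁ T₂ : Set V} (h : T₁ ⊆ T₂) : greach G X T₂ ⊆ greach G X T₁ :=
  greach_induction _ (fun _ hx hxT => mem_greach_of_mem hx (fun h' => hxT (h h')))
    (fun _ _ _ hu huv hv => mem_greach_of_adj hu huv (fun h' => hv (h h')))

/-- A path from `X \ S` into `R_G(X, T) \ R_G(X, S)` must cross `S` inside `R_G(X, T)`. -/
theorem inter_greach_nonempty_of_mem_diff {S : Set V} {v : V}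
    (hv : v ∈ greach G X T \ greach G X S) : (S ∩ greach G X T).Nonempty := by
  by_contra hST
  refine hv.2 (greach_induction (fun w => w ∈ greach G X S) ?_ ?_ v hv.1)
  · intro x hx hxT
    exact mem_greach_of_mem hx fun hxS => hST ⟨x, hxS, mem_greach_of_mem hx hxT⟩
  · intro u w hu huS huw hwT
    exact mem_greach_of_adj huS huw fun hwS => hST ⟨w, hwS, mem_greach_of_adj hu huw hwT⟩

end Reach

def sepBoundary (G : SimpleGraph V) (X D : Set V) : Set V :=
  {v | v ∉ D ∧ (v ∈ X ∨ ∃ d ∈ D, G.Adj d v)}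

section Boundary

variable {G : SimpleGraph V} {X Y T D : Set V}

theorem greach_sepBoundary_subset : greach G X (sepBoundary G X D) ⊆ D :=
  greach_induction _ (fun _ hx hxB => by_contra fun hxD => hxB ⟨hxD, .inl hx⟩)
    (fun u _ _ hu huv hvB => by_contra fun hvD => hvB ⟨hvD, .inr ⟨u, hu, huv⟩⟩)

theorem greach_subset_greach_sepBoundary (h : greach G X T ⊆ D) :
    greach G X T ⊆ greach G X (sepBoundary G X D) :=
  greach_induction _
    (fun _ hx hxT => mem_greach_of_mem hx fun hxB => hxB.1 (h (mem_greach_of_mem hx hxT)))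
    (fun _ _ hu hu' huv hvT =>
      mem_greach_of_adj hu' huv fun hvB => hvB.1 (h (mem_greach_of_adj hu huv hvT)))

theorem sepBoundary_greach_subset : sepBoundary G X (greach G X T) ⊆ T := by
  rintro v ⟨hvR, hvX | ⟨d, hd, hdv⟩⟩ <;> by_contra hvT
  · exact hvR (mem_greach_of_mem hvX hvT)
  · exact hvR (mem_greach_of_adj hd hdv hvT)

theorem isSep_sepBoundary (hDY : Disjoint D Y) : IsSep G X Y (sepBoundary G X D) :=
  (hDY.symm.mono_right greach_sepBoundary_subset).inter_eq

theorem sepBoundary_union_add_inter_le [Finite V] (A B : Set V) :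
    (sepBoundary G X (A ∪ B)).ncard + (sepBoundary G X (A ∩ B)).ncard ≤
      (sepBoundary G X A).ncard + (sepBoundary G X B).ncard := by
  have hunion : sepBoundary G X (A ∪ B) ∪ sepBoundary G X (A ∩ B) ⊆
      sepBoundary G X A ∪ sepBoundary G X B := by
    intro v
    simp only [sepBoundary, mem_union, mem_inter_iff, mem_ofPred_eq]
    grind
  have hinter : sepBoundary G X (A ∪ B) ∩ sepBoundary G X (A ∩ B) ⊆
      sepBoundary G X A ∩ sepBoundary G X B := by
    intro v
    simp only [sepBoundary, mem_union, mem_inter_iff, mem_ofPred_eq]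
    grind
  calc _ = (sepBoundary G X (A ∪ B) ∪ sepBoundary G X (A ∩ B)).ncard +
        (sepBoundary G X (A ∪ B) ∩ sepBoundary G X (A ∩ B)).ncard :=
        (ncard_union_add_ncard_inter _ _).symm
    _ ≤ (sepBoundary G X A ∪ sepBoundary G X B).ncard +
        (sepBoundary G X A ∩ sepBoundary G X B).ncard :=
        add_le_add (ncard_le_ncard hunion) (ncard_le_ncard hinter)
    _ = _ := ncard_union_add_ncard_inter _ _

theorem IsMinSep.subset_sepBoundary_greach {S : Set V} (hS : IsMinSep G X Y S) :
    S ⊆ sepBoundary G X (greach G X S) := by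
  intro s hs
  by_contra hsB
  have hsR : s ∉ greach G X S := fun h => h.1 hs
  obtain ⟨hsX, hsN⟩ : s ∉ X ∧ ∀ r ∈ greach G X S, ¬ G.Adj r s := by
    simpa [sepBoundary, hsR] using hsB
  have hreach : greach G X (S \ {s}) ⊆ greach G X S := by
    refine greach_induction _ (fun x hx hxT => mem_greach_of_mem hx ?_) ?_
    · intro hxS
      exact hxT ⟨hxS, fun hxs => hsX (hxs ▸ hx)⟩
    · intro u w _ hu huw hwT
      refine mem_greach_of_adj hu huw fun hwS => ?_
      obtain rfl : w = s := by_contra fun hws => hwT ⟨hwS, hws⟩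
      exact hsN u hu huw
  exact hS.2 _ (sdiff_singleton_ssubset.mpr hs)
    (subset_empty_iff.mp (hS.1 ▸ inter_subset_inter_right Y hreach))

end Boundary

section Important

variable {G : SimpleGraph V} {X Y S T D : Set V}

theorem IsImpSep.ncard_lt_of_greach_ssubset (hS : IsImpSep G X Y S) (hT : IsSep G X Y T)
    (hST : greach G X S ⊂ greach G X T) : S.ncard < T.ncard :=
  lt_of_not_ge fun hTS => hS.2 ⟨T, hT, hTS, hST⟩

theorem IsImpSep.ncard_lt_or_subset_sepBoundary (hS : IsImpSep G X Y S)
    (hSD : greach G X S ⊆ D) (hDY : Disjoint D Y) :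
    S.ncard < (sepBoundary G X D).ncard ∨ S ⊆ sepBoundary G X D := by
  rcases (greach_subset_greach_sepBoundary hSD).ssubset_or_eq with hlt | heq
  · exact .inl (hS.ncard_lt_of_greach_ssubset (isSep_sepBoundary hDY) hlt)
  · right
    calc S ⊆ sepBoundary G X (greach G X S) := hS.1.subset_sepBoundary_greach
      _ = sepBoundary G X (greach G X (sepBoundary G X D)) := by rw [heq]
      _ ⊆ sepBoundary G X D := sepBoundary_greach_subset

theorem IsImpSep.ncard_le_sepBoundary [Finite V] (hS : IsImpSep G X Y S)
    (hSD : greach G X S ⊆ D) (hDY : Disjoint D Y) : S.ncard ≤ (sepBoundary G X D).ncard :=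
  (hS.ncard_lt_or_subset_sepBoundary hSD hDY).elim le_of_lt ncard_le_ncard

theorem IsImpSep.ncard_lt_sepBoundary (hS : IsImpSep G X Y S)
    (hSD : greach G X S ⊆ D) (hDY : Disjoint D Y) (hSmeet : (S ∩ D).Nonempty) :
    S.ncard < (sepBoundary G X D).ncard := by
  obtain ⟨s, hs, hsD⟩ := hSmeet
  exact (hS.ncard_lt_or_subset_sepBoundary hSD hDY).resolve_right fun h => (h hs).1 hsD

theorem IsImpSep.sepBoundary_union_add_lt [Finite V] (hS : IsImpSep G X Y S) {A B : Set V}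
    (hSA : greach G X S ⊆ A) (hSB : greach G X S ⊆ B) (hABY : Disjoint (A ∩ B) Y)
    (hAmeet : (S ∩ A).Nonempty) :
    (sepBoundary G X (A ∪ B)).ncard + S.ncard + (S ∩ B).ncard <
      (sepBoundary G X A).ncard + (sepBoundary G X B).ncard + (S ∩ (A ∪ B)).ncard := by
  have hsubmod := sepBoundary_union_add_inter_le (G := G) (X := X) A B
  have hSAB : greach G X S ⊆ A ∩ B := subset_inter hSA hSB
  by_cases hABmeet : (S ∩ (A ∩ B)).Nonempty
  · have hlt := hS.ncard_lt_sepBoundary hSAB hABY hABmeet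
    have hmono : (S ∩ B).ncard ≤ (S ∩ (A ∪ B)).ncard :=
      ncard_le_ncard (inter_subset_inter_right S subset_union_right)
    omega
  · have hle := hS.ncard_le_sepBoundary hSAB hABY
    have hdisj : Disjoint (S ∩ A) (S ∩ B) :=
      disjoint_left.mpr fun v hvA hvB => hABmeet ⟨v, hvA.1, hvA.2, hvB.2⟩
    have hsplit : (S ∩ (A ∪ B)).ncard = (S ∩ A).ncard + (S ∩ B).ncard := by
      rw [inter_union_distrib_left, ncard_union_eq hdisj]
    have hpos := (ncard_pos (toFinite _)).mpr hAmeet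
    omega

variable [Finite V] {ι : Type*} [DecidableEq ι] {A : ι → Set V}

/-- Uncrossing: each further region pays for itself with a vertex of `S`. -/
theorem IsImpSep.sepBoundary_biUnion_add_card_le (hS : IsImpSep G X Y S) {I : Finset ι}
    (hI : I.Nonempty) (hSA : ∀ j ∈ I, greach G X S ⊆ A j)
    (hAS : ∀ j ∈ I, (sepBoundary G X (A j)).ncard ≤ S.ncard)
    (hAmeet : ∀ j ∈ I, (S ∩ A j).Nonempty)
    (hAY : ∀ i ∈ I, ∀ j ∈ I, i ≠ j → Disjoint (A i ∩ A j) Y) :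
    (sepBoundary G X (⋃ j ∈ I, A j)).ncard + I.card ≤ S.ncard + (S ∩ ⋃ j ∈ I, A j).ncard := by
  induction hI using Finset.Nonempty.cons_induction with
  | singleton a =>
    simp only [Finset.mem_singleton, forall_eq] at hAS hAmeet
    rw [Finset.set_biUnion_singleton, Finset.card_singleton]
    have := (ncard_pos (toFinite _)).mpr hAmeet
    omega
  | cons a I ha hI ih =>
    simp only [Finset.mem_cons, forall_eq_or_imp] at hSA hAS hAmeet hAY
    rw [Finset.cons_eq_insert, Finset.set_biUnion_insert, Finset.card_insert_of_notMem ha]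
    have hIbound := ih hSA.2 hAS.2 hAmeet.2 fun i hi j hj => (hAY.2 i hi).2 j hj
    obtain ⟨j, hj⟩ := hI
    have hSI : greach G X S ⊆ ⋃ j ∈ I, A j := (hSA.2 j hj).trans (subset_biUnion_of_mem hj)
    have hAIY : Disjoint (A a ∩ ⋃ j ∈ I, A j) Y := by
      simp only [inter_iUnion₂, disjoint_iUnion₂_left]
      exact fun i hi => hAY.1.2 i hi fun hai => ha (hai ▸ hi)
    have hstep := hS.sepBoundary_union_add_lt hSA.1 hSI hAIY hAmeet.1
    have haS := hAS.1
    omega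

theorem IsImpSep.card_le_two_mul_of_regions (hS : IsImpSep G X Y S) (I : Finset ι)
    (hSA : ∀ j ∈ I, greach G X S ⊆ A j)
    (hAS : ∀ j ∈ I, (sepBoundary G X (A j)).ncard ≤ S.ncard)
    (hAmeet : ∀ j ∈ I, (S ∩ A j).Nonempty)
    (hAY : ∀ i ∈ I, ∀ j ∈ I, i ≠ j → Disjoint (A i ∩ A j) Y) :
    I.card ≤ 2 * S.ncard := by
  rcases I.eq_empty_or_nonempty with rfl | hI
  · simp
  have hbound := hS.sepBoundary_biUnion_add_card_le hI hSA hAS hAmeet hAY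
  have : (S ∩ ⋃ j ∈ I, A j).ncard ≤ S.ncard := ncard_le_ncard inter_subset_left
  omega

end Important

theorem IsImpSep.exists_dominating_of_not_isImpSep [Finite V] {G : SimpleGraph V}
    {X Y Y' S : Set V} (hS : IsImpSep G X Y S) (hY' : Y' ⊆ Y) (hS' : ¬ IsImpSep G X Y' S) :
    ∃ T, IsSep G X Y' T ∧ SepDominates G X T S := by
  have hsep' : IsSep G X Y' S := subset_empty_iff.mp (hS.1.1 ▸ inter_subset_inter_left _ hY')
  by_contra hnone
  refine hS' ⟨⟨hsep', fun T hTS hT => ?_⟩, hnone⟩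
  -- by minimality for `Y`, the smaller `T` lets some `y ∈ Y` through, beyond `R_G(X, S)`
  obtain ⟨y, hyY, hyT⟩ := nonempty_iff_ne_empty.mpr (hS.1.2 T hTS)
  have hyS : y ∉ greach G X S := fun hyS => hS.1.1.subset ⟨hyY, hyS⟩
  exact hnone ⟨T, hT, (ncard_lt_ncard hTS).le,
    (greach_anti hTS.subset).ssubset_of_ne fun h => hyS (h ▸ hyT)⟩

section Labels

variable {L : Type} (f : V → Set L)

theorem labelVerts_mono {J₁ J₂ : Set L} (h : J₁ ⊆ J₂) : labelVerts f J₁ ⊆ labelVerts f J₂ :=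
  fun _ ⟨l, hl, hlJ⟩ => ⟨l, hl, h hlJ⟩

theorem exists_finset_labelVerts_eq [Finite V] (J : Set L) :
    ∃ T : Finset L, ↑T ⊆ J ∧ labelVerts f ↑T = labelVerts f J := by
  choose g hg using fun v (hv : v ∈ labelVerts f J) => hv
  have hfin := finite_range fun v : labelVerts f J => g v v.2
  have hsub : range (fun v : labelVerts f J => g v v.2) ⊆ J := by
    rintro _ ⟨v, rfl⟩
    exact (hg v v.2).2
  refine ⟨hfin.toFinset, by rwa [Finite.coe_toFinset], ?_⟩
  rw [Finite.coe_toFinset]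
  exact subset_antisymm (labelVerts_mono f hsub) fun v hv => ⟨g v hv, (hg v hv).1, ⟨v, hv⟩, rfl⟩

theorem IsImpSep.card_le_two_mul_of_minimal [Finite V] [DecidableEq L] {G : SimpleGraph V}
    {X S : Set V} {T : Finset L} (hT : IsImpSep G X (labelVerts f T) S)
    (hmin : ∀ j ∈ T, ¬ IsImpSep G X (labelVerts f ↑(T.erase j)) S) :
    T.card ≤ 2 * S.ncard := by
  choose! Sj hSj_sep hSj_dom using fun j (hj : j ∈ T) =>
    hT.exists_dominating_of_not_isImpSep
      (labelVerts_mono f (Finset.coe_subset.mpr (T.erase_subset j))) (hmin j hj)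
  have hlabel : ∀ j ∈ T, ∀ v ∈ greach G X (Sj j), ∀ l ∈ f v, l ∈ T → l = j :=
    fun j hj v hv l hl hlT => by_contra fun hlj =>
      eq_empty_iff_forall_notMem.mp (hSj_sep j hj) v
        ⟨⟨l, hl, Finset.mem_erase.mpr ⟨hlj, hlT⟩⟩, hv⟩
  refine hT.card_le_two_mul_of_regions T (A := fun j => greach G X (Sj j))
    (fun j hj => (hSj_dom j hj).2.subset)
    (fun j hj => (ncard_le_ncard sepBoundary_greach_subset).trans (hSj_dom j hj).1)
    (fun j hj => ?_) (fun i hi j hj hij => ?_)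
  · obtain ⟨v, hv⟩ := exists_of_ssubset (hSj_dom j hj).2
    exact inter_greach_nonempty_of_mem_diff hv
  · refine disjoint_left.mpr fun v hv ⟨l, hl, hlT⟩ => hij ?_
    exact (hlabel i hi v hv.1 l hl hlT).symm.trans (hlabel j hj v hv.2 l hl hlT)

end Labels

theorem stmt12_general [Fintype V] {L : Type} (G : SimpleGraph V)
    (f : V → Set L) (X : Set V) (J : Set L) (S : Set V) (k : ℕ) (hk : S.ncard = k)
    (hS : IsImpSep G X (labelVerts f J) S) :
    ∃ Jstar ⊆ J, Jstar.ncard ≤ k * (k + 3) / 2 ∧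
      IsImpSep G X (labelVerts f Jstar) S := by
  classical
  obtain ⟨T₀, hT₀J, hT₀⟩ := exists_finset_labelVerts_eq f J
  obtain ⟨T, hTT₀, hT, hTmin⟩ := exists_minimal_le_of_wellFoundedLT
    (fun T : Finset L => IsImpSep G X (labelVerts f ↑T) S) T₀ (hT₀ ▸ hS)
  have hcard : T.card ≤ 2 * k := hk ▸ hT.card_le_two_mul_of_minimal f
    fun j hj hj' => T.notMem_erase j (hTmin hj' (T.erase_subset j) hj)
  refine ⟨T, (Finset.coe_subset.mpr hTT₀).trans hT₀J, ?_, hT⟩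
  rw [ncard_coe_finset, Nat.le_div_iff_mul_le two_pos]
  nlinarith [Nat.le_mul_self k]

/-- small witnessing label set: if `S` is an important
`(X, V_G(J))`-separator of size `k` in a labeled graph, then there is `J* ⊆ J` with
`|J*| ≤ Σ_{i=1}^k (i+1) = k(k+3)/2` such that `S` is an important
`(X, V_G(J*))`-separator. -/
theorem stmt12 [Fintype V] {L : Type} [Fintype L] (G : SimpleGraph V)
    (f : V → Set L) (X : Set V) (J : Set L) (S : Set V) (k : ℕ) (hk : S.ncard = k)
    (hS : IsImpSep G X (labelVerts f J) S) :
    ∃ Jstar ⊆ J, Jstar.ncard ≤ k * (k + 3) / 2 ∧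
      IsImpSep G X (labelVerts f Jstar) S :=
  stmt12_general G f X J S k hk hS
end
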